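/- Let k ≥ 2 and let β_1, ..., β_k be positive real numbers with β_1 + β_2 + ... + β_k = π. Then cot(β_1/2) + cot(β_2/2) + ... + cot(β_k/2) ≥ k·cot(π/(2k)) ≥ k. -/

import Mathlib

/-!
Since `cot'' = 2 cos / sin³ ≥ 0` on `(0, π/2]`, the cotangent is convex there, and every `βᵢ / 2`
lies in that interval. Jensen's inequality at the mean `π / (2k)` of the `βᵢ / 2` gives the first
bound; the second holds because `π / (2k) ≤ π / 4`, where `cot ≥ 1`.
-/

open Real Set

theorem Real.hasDerivAt_cot {x : ℝ} (hx : sin x ≠ 0) : HasDerivAt cot (-1 / sin x ^ 2) x := by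
  have h := (hasDerivAt_cos x).div (hasDerivAt_sin x) hx
  rw [show cos / sin = cot from funext fun y => (cot_eq_cos_div_sin y).symm] at h
  refine h.congr_deriv ?_
  rw [← sin_sq_add_cos_sq x]
  ring

theorem Real.hasDerivAt_neg_one_div_sin_sq {x : ℝ} (hx : sin x ≠ 0) :
    HasDerivAt (fun y => -1 / sin y ^ 2) (2 * cos x / sin x ^ 3) x := by
  refine ((hasDerivAt_const x (-1 : ℝ)).fun_div ((hasDerivAt_sin x).fun_pow 2)
    (pow_ne_zero 2 hx)).congr_deriv ?_
  field_simp
  ring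

theorem Real.convexOn_cot_Ioc : ConvexOn ℝ (Ioc 0 (π / 2)) cot := by
  have hsin : ∀ x ∈ Ioc 0 (π / 2), sin x ≠ 0 := fun x hx =>
    (sin_pos_of_pos_of_lt_pi hx.1 (by linarith [hx.2, pi_pos])).ne'
  refine convexOn_of_hasDerivWithinAt2_nonneg (f' := fun x => -1 / sin x ^ 2)
    (f'' := fun x => 2 * cos x / sin x ^ 3) (convex_Ioc _ _)
    (fun x hx => (hasDerivAt_cot (hsin x hx)).continuousAt.continuousWithinAt)
    (fun x hx => ?_) (fun x hx => ?_) (fun x hx => ?_) <;> rw [interior_Ioc] at hx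
  · exact (hasDerivAt_cot (hsin x (Ioo_subset_Ioc_self hx))).hasDerivWithinAt
  · exact (hasDerivAt_neg_one_div_sin_sq (hsin x (Ioo_subset_Ioc_self hx))).hasDerivWithinAt
  · have := sin_pos_of_pos_of_lt_pi hx.1 (by linarith [hx.2, pi_pos])
    have := cos_nonneg_of_mem_Icc ⟨by linarith [hx.1, pi_pos], hx.2.le⟩
    positivity

theorem Real.one_le_cot_of_le_pi_div_four {x : ℝ} (hx₀ : 0 < x) (hx : x ≤ π / 4) :
    1 ≤ cot x := by
  have hsin : 0 < sin x := sin_pos_of_pos_of_lt_pi hx₀ (by linarith [pi_pos])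
  rw [cot_eq_cos_div_sin, one_le_div hsin, ← sin_pi_div_two_sub]
  exact sin_le_sin_of_le_of_le_pi_div_two (by linarith) (by linarith) (by linarith)

theorem ConvexOn.card_mul_map_average_le {ι : Type*} [Fintype ι] [Nonempty ι] {s : Set ℝ}
    {f : ℝ → ℝ} (hf : ConvexOn ℝ s f) {p : ι → ℝ} (hp : ∀ i, p i ∈ s) :
    Fintype.card ι * f ((∑ i, p i) / Fintype.card ι) ≤ ∑ i, f (p i) := by
  have hn : (0 : ℝ) < Fintype.card ι := by exact_mod_cast Fintype.card_pos
  have h := hf.map_sum_le (t := Finset.univ) (w := fun _ => 1 / (Fintype.card ι : ℝ)) (p := p)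
    (fun _ _ => by positivity) (by simp [Finset.card_univ, hn.ne']) (fun i _ => hp i)
  simp only [smul_eq_mul, one_div_mul_eq_div, ← Finset.sum_div] at h
  rwa [← le_div_iff₀' hn]

/-- If `β 0, …, β (k-1)` are positive reals summing to `π`
(with `k ≥ 2`), then `∑ cot (βᵢ/2) ≥ k · cot (π/(2k)) ≥ k`. -/
theorem sum_cot_ge_of_sum_eq_pi
    (k : ℕ) (hk : 2 ≤ k) (β : Fin k → ℝ)
    (hpos : ∀ i, 0 < β i) (hsum : ∑ i, β i = π) :
    (k : ℝ) * Real.cot (π / (2 * k)) ≤ ∑ i, Real.cot (β i / 2) ∧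
      (k : ℝ) ≤ (k : ℝ) * Real.cot (π / (2 * k)) := by
  have : NeZero k := ⟨by omega⟩
  have hmem (i : Fin k) : β i / 2 ∈ Ioc 0 (π / 2) := by
    have : β i ≤ π := hsum ▸ Finset.single_le_sum (fun j _ => (hpos j).le) (Finset.mem_univ i)
    constructor <;> linarith [hpos i]
  have hmean : (∑ i, β i / 2) / k = π / (2 * k) := by
    rw [← Finset.sum_div, hsum, div_div]
  refine ⟨?_, le_mul_of_one_le_right k.cast_nonneg (one_le_cot_of_le_pi_div_four ?_ ?_)⟩
  · simpa only [Fintype.card_fin, hmean] using convexOn_cot_Ioc.card_mul_map_average_le hmem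
  · positivity
  · have : (2 : ℝ) ≤ k := by exact_mod_cast hk
    gcongr
    linarith
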